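/- For every integer k ≥ 1 and all reals ε, α with 0 < ε ≤ α < 1 and α ≥ 2/(−log₂ ε), the binomial upper tail satisfies Σ_{j ∈ {0,…,k}, j ≥ α·k} C(k,j)·ε^j·(1−ε)^{k−j} ≤ 2^{−k}. -/
import Mathlib


/-- If `0 < ε ≤ α < 1` and `α ≥ 2/(-log₂ ε)`, then the binomial upper tail
`∑_{j ≥ αk} C(k,j) ε^j (1-ε)^{k-j}` is at most `2^{-k}`. -/
theorem binomial_tail_le_two_pow_neg_k
    (k : ℕ) (hk : 1 ≤ k) (ε α : ℝ) (hε : 0 < ε) (hεα : ε ≤ α) (hα : α < 1)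
    (hαbig : 2 / (-Real.logb 2 ε) ≤ α) :
    ∑ j ∈ (Finset.range (k + 1)).filter (fun j : ℕ => α * k ≤ (j : ℝ)),
        (k.choose j : ℝ) * ε ^ j * (1 - ε) ^ (k - j)
      ≤ 2 ^ (-(k : ℝ)) := by
  have hε1 : ε < 1 := lt_of_le_of_lt hεα hα
  set L := Real.logb 2 ε with hLdef
  have hL : L < 0 := Real.logb_neg (by norm_num) hε hε1
  have hαL : 2 ≤ α * (-L) := by
    rw [div_le_iff₀ (by linarith)] at hαbig; exact hαbig
  have hk0 : (0:ℝ) ≤ (k:ℝ) := Nat.cast_nonneg k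
  have hkey : ε ^ (α * k) ≤ (2:ℝ) ^ (-(2:ℝ) * k) := by
    have hε2 : ε = (2:ℝ) ^ L := (Real.rpow_logb (by norm_num) (by norm_num) hε).symm
    nth_rewrite 1 [hε2]
    rw [← Real.rpow_mul (by norm_num : (0:ℝ) ≤ 2)]
    apply Real.rpow_le_rpow_of_exponent_le one_le_two
    nlinarith
  calc ∑ j ∈ (Finset.range (k + 1)).filter (fun j : ℕ => α * k ≤ (j : ℝ)),
        (k.choose j : ℝ) * ε ^ j * (1 - ε) ^ (k - j)
      ≤ ∑ j ∈ (Finset.range (k + 1)).filter (fun j : ℕ => α * k ≤ (j : ℝ)),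
        (k.choose j : ℝ) * ε ^ (α * k) := by
        apply Finset.sum_le_sum
        intro j hj
        have hjk : α * k ≤ (j : ℝ) := (Finset.mem_filter.mp hj).2
        have h1 : ε ^ j ≤ ε ^ (α * k) := by
          rw [← Real.rpow_natCast ε j]
          exact Real.rpow_le_rpow_of_exponent_ge hε hε1.le hjk
        have h2 : (1 - ε) ^ (k - j) ≤ 1 := pow_le_one₀ (by linarith) (by linarith)
        calc (k.choose j : ℝ) * ε ^ j * (1 - ε) ^ (k - j)
            ≤ (k.choose j : ℝ) * ε ^ j * 1 := by
              apply mul_le_mul_of_nonneg_left h2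
              positivity
          _ = (k.choose j : ℝ) * ε ^ j := by ring
          _ ≤ (k.choose j : ℝ) * ε ^ (α * k) := by
              apply mul_le_mul_of_nonneg_left h1
              positivity
    _ ≤ ∑ j ∈ Finset.range (k + 1), (k.choose j : ℝ) * ε ^ (α * k) := by
        apply Finset.sum_le_sum_of_subset_of_nonneg (Finset.filter_subset _ _)
        intro j _ _
        positivity
    _ = 2 ^ k * ε ^ (α * k) := by
        rw [← Finset.sum_mul]
        norm_num [← Nat.cast_sum, Nat.sum_range_choose]
    _ ≤ 2 ^ k * 2 ^ (-(2:ℝ) * k) := by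
        apply mul_le_mul_of_nonneg_left hkey
        positivity
    _ = 2 ^ (-(k:ℝ)) := by
        rw [← Real.rpow_natCast 2 k, ← Real.rpow_add (by norm_num : (0:ℝ) < 2)]
        congr 1
        ring
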